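/- The 3×3 matrix function Ψ(t) = [[X(t), X(t)Y(t)], [0, e^{iℓωt}]] satisfies Ψ′(t) = A_ℓ(t)Ψ(t) for all t ∈ I, where A_ℓ(t) is the 3×3 block matrix [[JD²H(x^h(t)), ĝ_ℓ(x^h(t))], [0, iℓω]], and det Ψ(t) = e^{iℓωt} ≠ 0; in particular Ψ is a fundamental matrix of the variational system ξ̇ = JD²H(x^h(t))ξ + ĝ_ℓ(x^h(t))η, η̇ = iℓωη. -/

import Mathlib

open Matrix

/-- First partial derivative `∂H/∂x₁`. -/
noncomputable def D1 (H : ℝ × ℝ → ℝ) (x : ℝ × ℝ) : ℝ := fderiv ℝ H x (1, 0)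

/-- Second partial derivative `∂H/∂x₂`. -/
noncomputable def D2 (H : ℝ × ℝ → ℝ) (x : ℝ × ℝ) : ℝ := fderiv ℝ H x (0, 1)

/-- The matrix `J D²H(x^h(t))` of the variational equation, where `J = [[0,1],[−1,0]]`. -/
noncomputable def varMatrix (H : ℝ × ℝ → ℝ) (xh : ℝ → ℝ × ℝ) (t : ℝ) :
    Matrix (Fin 2) (Fin 2) ℝ :=
  !![D1 (D2 H) (xh t), D2 (D2 H) (xh t);
     -(D1 (D1 H) (xh t)), -(D2 (D1 H) (xh t))]

/-- The matrix `X(t)` (complexified) with first column `JDH(x^h(t))` and second column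
`χ(t)·JDH(x^h(t)) + (0, 1/∂₂H(x^h(t)))ᵀ`. -/
noncomputable def Xc (H : ℝ × ℝ → ℝ) (xh : ℝ → ℝ × ℝ) (χ : ℝ → ℝ) (t : ℝ) :
    Matrix (Fin 2) (Fin 2) ℂ :=
  (!![D2 H (xh t), χ t * D2 H (xh t);
      -(D1 H (xh t)), -(χ t * D1 H (xh t)) + (D2 H (xh t))⁻¹]).map Complex.ofReal

/-- The 3×3 coefficient matrix `A_ℓ(t) = [[J D²H(x^h(t)), ĝ_ℓ(x^h(t))], [0, iℓω]]`. -/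
noncomputable def coeffMatrix (H : ℝ × ℝ → ℝ) (xh : ℝ → ℝ × ℝ)
    (gl : ℝ × ℝ → Fin 2 → ℂ) (ω : ℝ) (ℓ : ℤ) (t : ℝ) : Matrix (Fin 3) (Fin 3) ℂ :=
  !![(varMatrix H xh t 0 0 : ℂ), (varMatrix H xh t 0 1 : ℂ), gl (xh t) 0;
     (varMatrix H xh t 1 0 : ℂ), (varMatrix H xh t 1 1 : ℂ), gl (xh t) 1;
     0, 0, Complex.I * ℓ * ω]

/-- The 3×3 matrix `Ψ(t) = [[X(t), X(t)Y(t)], [0, e^{iℓωt}]]`. -/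
noncomputable def Psi (H : ℝ × ℝ → ℝ) (xh : ℝ → ℝ × ℝ) (χ : ℝ → ℝ)
    (Y : ℝ → Fin 2 → ℂ) (ω : ℝ) (ℓ : ℤ) (t : ℝ) : Matrix (Fin 3) (Fin 3) ℂ :=
  !![Xc H xh χ t 0 0, Xc H xh χ t 0 1, (Xc H xh χ t *ᵥ Y t) 0;
     Xc H xh χ t 1 0, Xc H xh χ t 1 1, (Xc H xh χ t *ᵥ Y t) 1;
     0, 0, Complex.exp (Complex.I * ℓ * ω * t)]

/-! The columns of `X` solve the variational equation `ξ̇ = J D²H(x^h) ξ`: the first is the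
velocity of the Hamiltonian orbit, and `χ` is precisely the correction making the second one a
solution too (using the symmetry of `D²H`), with Wronskian `det X = 1`. By variation of constants
`X Y` then solves the inhomogeneous equation `ξ̇ = J D²H ξ + ĝ_ℓ e^{iℓωt}`, and `Ψ` is block upper
triangular, so `Ψ′ = A_ℓ Ψ` blockwise and `det Ψ = det X · e^{iℓωt}`. -/

section PartialDerivatives

variable {f : ℝ × ℝ → ℝ}

theorem fderiv_apply_eq_D1_D2 (x : ℝ × ℝ) (u w : ℝ) :
    fderiv ℝ f x (u, w) = u * D1 f x + w * D2 f x := by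
  have huw : ((u, w) : ℝ × ℝ) = u • (1, 0) + w • (0, 1) := by simp
  rw [huw, map_add, map_smul, map_smul, smul_eq_mul, smul_eq_mul, D1, D2]

theorem hasDerivAt_comp_partials {x : ℝ → ℝ × ℝ} {u w t : ℝ} (hf : DifferentiableAt ℝ f (x t))
    (hx : HasDerivAt x (u, w) t) :
    HasDerivAt (fun s => f (x s)) (u * D1 f (x t) + w * D2 f (x t)) t := by
  rw [← fderiv_apply_eq_D1_D2]
  exact hf.hasFDerivAt.comp_hasDerivAt t hx

theorem differentiable_D1 (hf : ContDiff ℝ 2 f) : Differentiable ℝ (D1 f) :=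
  ((hf.fderiv_right (by norm_num)).clm_apply contDiff_const).differentiable one_ne_zero

theorem differentiable_D2 (hf : ContDiff ℝ 2 f) : Differentiable ℝ (D2 f) :=
  ((hf.fderiv_right (by norm_num)).clm_apply contDiff_const).differentiable one_ne_zero

theorem D1_D2_comm (hf : ContDiff ℝ 2 f) (x : ℝ × ℝ) : D1 (D2 f) x = D2 (D1 f) x := by
  have hdf : DifferentiableAt ℝ (fderiv ℝ f) x :=
    ((hf.fderiv_right (by norm_num)).differentiable one_ne_zero) x
  show fderiv ℝ (fun y => fderiv ℝ f y (0, 1)) x (1, 0) =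
    fderiv ℝ (fun y => fderiv ℝ f y (1, 0)) x (0, 1)
  rw [fderiv_clm_apply hdf (differentiableAt_const _),
    fderiv_clm_apply hdf (differentiableAt_const _)]
  simpa using hf.contDiffAt.isSymmSndFDerivAt (by simp) (1, 0) (0, 1)

end PartialDerivatives

section BlockUpper

variable {R : Type*}

def blockUpper [Zero R] (X : Matrix (Fin 2) (Fin 2) R) (z : Fin 2 → R) (e : R) :
    Matrix (Fin 3) (Fin 3) R :=
  !![X 0 0, X 0 1, z 0; X 1 0, X 1 1, z 1; 0, 0, e]

theorem blockUpper_mul_blockUpper [CommRing R] (A X : Matrix (Fin 2) (Fin 2) R)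
    (g z : Fin 2 → R) (c e : R) :
    blockUpper A g c * blockUpper X z e = blockUpper (A * X) (A *ᵥ z + e • g) (c * e) := by
  ext i j
  fin_cases i <;> fin_cases j <;>
    simp [blockUpper, mul_apply, Fin.sum_univ_succ] <;> ring

theorem det_blockUpper [CommRing R] (X : Matrix (Fin 2) (Fin 2) R) (z : Fin 2 → R) (e : R) :
    (blockUpper X z e).det = X.det * e := by
  simp [blockUpper, det_fin_three, det_fin_two]
  ring

variable {𝕜 F : Type*} [NontriviallyNormedField 𝕜] [NormedAddCommGroup F] [NormedSpace 𝕜 F]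

theorem hasDerivAt_blockUpper {X : 𝕜 → Matrix (Fin 2) (Fin 2) F} {z : 𝕜 → Fin 2 → F}
    {e : 𝕜 → F} {X' : Matrix (Fin 2) (Fin 2) F} {z' : Fin 2 → F} {e' : F} {t : 𝕜}
    (hX : ∀ i j, HasDerivAt (fun s => X s i j) (X' i j) t)
    (hz : ∀ i, HasDerivAt (fun s => z s i) (z' i) t) (he : HasDerivAt e e' t) (i j : Fin 3) :
    HasDerivAt (fun s => blockUpper (X s) (z s) (e s) i j) (blockUpper X' z' e' i j) t := by
  fin_cases i <;> fin_cases j <;>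
    first | exact hX _ _ | exact hz _ | exact he | exact hasDerivAt_const _ _

end BlockUpper

section VariationOfConstants

variable {𝕜 𝔸 : Type*} [NontriviallyNormedField 𝕜] [NormedCommRing 𝔸] [NormedAlgebra 𝕜 𝔸]
  {m n : Type*} [Fintype n]

theorem hasDerivAt_mulVec_apply {A : 𝕜 → Matrix m n 𝔸} {v : 𝕜 → n → 𝔸}
    {A' : Matrix m n 𝔸} {v' : n → 𝔸} {t : 𝕜}
    (hA : ∀ i k, HasDerivAt (fun s => A s i k) (A' i k) t)
    (hv : ∀ k, HasDerivAt (fun s => v s k) (v' k) t) (i : m) :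
    HasDerivAt (fun s => (A s *ᵥ v s) i) ((A' *ᵥ v t + A t *ᵥ v') i) t := by
  simp only [mulVec, dotProduct, Pi.add_apply, ← Finset.sum_add_distrib]
  exact HasDerivAt.fun_sum fun k _ => (hA i k).mul (hv k)

theorem hasDerivAt_mulVec_of_variation_of_constants [DecidableEq n]
    {X : 𝕜 → Matrix n n 𝔸} {y : 𝕜 → n → 𝔸} {V : Matrix n n 𝔸} {g : n → 𝔸} {e : 𝔸} {t : 𝕜}
    (hX : ∀ i j, HasDerivAt (fun s => X s i j) ((V * X t) i j) t) (hdet : IsUnit (X t).det)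
    (hy : ∀ k, HasDerivAt (fun s => y s k) (((X t)⁻¹ *ᵥ g) k * e) t) (i : n) :
    HasDerivAt (fun s => (X s *ᵥ y s) i) ((V *ᵥ (X t *ᵥ y t) + e • g) i) t := by
  have hy' : (fun k => ((X t)⁻¹ *ᵥ g) k * e) = e • ((X t)⁻¹ *ᵥ g) := by
    ext k
    exact mul_comm _ _
  have hderiv := hasDerivAt_mulVec_apply hX hy i
  rwa [hy', mulVec_smul, mulVec_mulVec, mul_nonsing_inv _ hdet, one_mulVec, ← mulVec_mulVec]
    at hderiv

end VariationOfConstants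

theorem hasDerivAt_cexp_mul_ofReal (c : ℂ) (t : ℝ) :
    HasDerivAt (fun s : ℝ => Complex.exp (c * s)) (c * Complex.exp (c * t)) t := by
  simpa [mul_comm] using (((hasDerivAt_id t).ofReal_comp).const_mul c).cexp

section Hamiltonian

variable {H : ℝ × ℝ → ℝ} {xh : ℝ → ℝ × ℝ} {χ : ℝ → ℝ} {t : ℝ}

variable (H xh χ t) in
noncomputable def Xr : Matrix (Fin 2) (Fin 2) ℝ :=
  !![D2 H (xh t), χ t * D2 H (xh t);
      -(D1 H (xh t)), -(χ t * D1 H (xh t)) + (D2 H (xh t))⁻¹]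

theorem Xc_eq_map : Xc H xh χ t = (Xr H xh χ t).map Complex.ofReal := rfl

theorem det_Xr (hne : D2 H (xh t) ≠ 0) : (Xr H xh χ t).det = 1 := by
  rw [Xr, det_fin_two_of]
  field_simp
  ring

theorem det_Xc (hne : D2 H (xh t) ≠ 0) : (Xc H xh χ t).det = 1 := by
  have h := Complex.ofRealHom.map_det (Xr H xh χ t)
  rw [det_Xr hne, map_one] at h
  exact h.symm

theorem hasDerivAt_Xr (hH : ContDiff ℝ 2 H)
    (hxh : HasDerivAt xh (D2 H (xh t), -(D1 H (xh t))) t) (hne : D2 H (xh t) ≠ 0)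
    (hχ : HasDerivAt χ (D2 (D2 H) (xh t) / (D2 H (xh t)) ^ 2) t) (i j : Fin 2) :
    HasDerivAt (fun s => Xr H xh χ s i j) ((varMatrix H xh t * Xr H xh χ t) i j) t := by
  have hq := hasDerivAt_comp_partials (differentiable_D2 hH _) hxh
  have hp := hasDerivAt_comp_partials (differentiable_D1 hH _) hxh
  have hsymm := D1_D2_comm hH (xh t)
  fin_cases i <;> fin_cases j <;>
    simp only [Xr, varMatrix, mul_fin_two, of_apply, cons_val', cons_val_zero, cons_val_one,
      cons_val_fin_one, Fin.isValue, Fin.zero_eta, Fin.mk_one]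
  · exact hq.congr_deriv (by ring)
  · exact (hχ.mul hq).congr_deriv (by field_simp; ring)
  · exact hp.neg.congr_deriv (by ring)
  · refine ((hχ.mul hp).neg.add (hq.inv hne)).congr_deriv ?_
    rw [← hsymm]
    field_simp
    ring

theorem hasDerivAt_Xc (hH : ContDiff ℝ 2 H)
    (hxh : HasDerivAt xh (D2 H (xh t), -(D1 H (xh t))) t) (hne : D2 H (xh t) ≠ 0)
    (hχ : HasDerivAt χ (D2 (D2 H) (xh t) / (D2 H (xh t)) ^ 2) t) (i j : Fin 2) :
    HasDerivAt (fun s => Xc H xh χ s i j)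
      (((varMatrix H xh t).map Complex.ofReal * Xc H xh χ t) i j) t := by
  have hmap : (varMatrix H xh t).map Complex.ofReal * Xc H xh χ t =
      (varMatrix H xh t * Xr H xh χ t).map Complex.ofRealHom :=
    (Matrix.map_mul (f := Complex.ofRealHom)).symm
  rw [hmap]
  exact (hasDerivAt_Xr hH hxh hne hχ i j).ofReal_comp

end Hamiltonian

theorem Psi_fundamental_matrix_general
    (H : ℝ × ℝ → ℝ) (hH : ContDiff ℝ 2 H)
    (I : Set ℝ)
    (xh : ℝ → ℝ × ℝ)
    (hxh : ∀ t ∈ I, HasDerivAt xh (D2 H (xh t), -(D1 H (xh t))) t)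
    (hne : ∀ t ∈ I, D2 H (xh t) ≠ 0)
    (χ : ℝ → ℝ)
    (hχ : ∀ t ∈ I, HasDerivAt χ (D2 (D2 H) (xh t) / (D2 H (xh t)) ^ 2) t)
    (ω : ℝ) (ℓ : ℤ)
    (gl : ℝ × ℝ → Fin 2 → ℂ)
    (Y : ℝ → Fin 2 → ℂ)
    (hY : ∀ t ∈ I, ∀ i : Fin 2,
      HasDerivAt (fun s => Y s i)
        (((Xc H xh χ t)⁻¹ *ᵥ gl (xh t)) i * Complex.exp (Complex.I * ℓ * ω * t)) t) :
    ∀ t ∈ I,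
      (∀ i j : Fin 3,
        HasDerivAt (fun s => Psi H xh χ Y ω ℓ s i j)
          ((coeffMatrix H xh gl ω ℓ t * Psi H xh χ Y ω ℓ t) i j) t) ∧
      (Psi H xh χ Y ω ℓ t).det = Complex.exp (Complex.I * ℓ * ω * t) ∧
      Complex.exp (Complex.I * ℓ * ω * t) ≠ 0 := by
  intro t ht
  have hX := hasDerivAt_Xc hH (hxh t ht) (hne t ht) (hχ t ht)
  have hdet := det_Xc (χ := χ) (hne t ht)
  have hXY := hasDerivAt_mulVec_of_variation_of_constants hX (hdet ▸ isUnit_one) (hY t ht)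
  have hPsi : ∀ s, Psi H xh χ Y ω ℓ s =
      blockUpper (Xc H xh χ s) (Xc H xh χ s *ᵥ Y s) (Complex.exp (Complex.I * ℓ * ω * s)) :=
    fun s => rfl
  have hA : coeffMatrix H xh gl ω ℓ t =
      blockUpper ((varMatrix H xh t).map Complex.ofReal) (gl (xh t)) (Complex.I * ℓ * ω) := rfl
  refine ⟨fun i j => ?_, ?_, Complex.exp_ne_zero _⟩
  · simp only [hPsi, hA, blockUpper_mul_blockUpper]
    exact hasDerivAt_blockUpper hX hXY (hasDerivAt_cexp_mul_ofReal _ t) i j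
  · rw [hPsi, det_blockUpper, hdet, one_mul]

/-- `Ψ(t) = [[X(t), X(t)Y(t)], [0, e^{iℓωt}]]` solves `Ψ′ = A_ℓ(t) Ψ` on `I` and
`det Ψ(t) = e^{iℓωt} ≠ 0`; in particular it is a fundamental matrix of the variational
system `ξ̇ = J D²H(x^h(t)) ξ + ĝ_ℓ(x^h(t)) η, η̇ = iℓω η`. -/
theorem Psi_fundamental_matrix
    (H : ℝ × ℝ → ℝ) (hH : ContDiff ℝ 2 H)
    (I : Set ℝ) (hIopen : IsOpen I) (hIconn : I.OrdConnected)
    (xh : ℝ → ℝ × ℝ)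
    (hxh : ∀ t ∈ I, HasDerivAt xh (D2 H (xh t), -(D1 H (xh t))) t)
    (hne : ∀ t ∈ I, D2 H (xh t) ≠ 0)
    (χ : ℝ → ℝ)
    (hχ : ∀ t ∈ I, HasDerivAt χ (D2 (D2 H) (xh t) / (D2 H (xh t)) ^ 2) t)
    (ω : ℝ) (hω : 0 < ω) (ℓ : ℤ)
    (gl : ℝ × ℝ → Fin 2 → ℂ) (hgl : Continuous fun x => gl x)
    (Y : ℝ → Fin 2 → ℂ)
    (hY : ∀ t ∈ I, ∀ i : Fin 2,
      HasDerivAt (fun s => Y s i)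
        (((Xc H xh χ t)⁻¹ *ᵥ gl (xh t)) i * Complex.exp (Complex.I * ℓ * ω * t)) t) :
    ∀ t ∈ I,
      (∀ i j : Fin 3,
        HasDerivAt (fun s => Psi H xh χ Y ω ℓ s i j)
          ((coeffMatrix H xh gl ω ℓ t * Psi H xh χ Y ω ℓ t) i j) t) ∧
      (Psi H xh χ Y ω ℓ t).det = Complex.exp (Complex.I * ℓ * ω * t) ∧
      Complex.exp (Complex.I * ℓ * ω * t) ≠ 0 :=
  Psi_fundamental_matrix_general H hH I xh hxh hne χ hχ ω ℓ gl Y hY
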